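/- Let M be a symmetric irreducible r×r 0–1 transition matrix and let A : Σ̂_M → ℝ be Lipschitz continuous. For each β > 0, let φ_β be a forward effective potential for βA and λ_β the effective constant, i.e. G⁺_{βA}(φ_β) = φ_β + λ_β. Then the family {φ_β/β}_{β>0} is equi-Lipschitz: for every β > 0 and all y, ȳ ∈ Σ*_M, |φ_β(y) − φ_β(ȳ)| ≤ β (‖A‖₀ + Lip(A)) d(y,ȳ); equivalently Lip(φ_β/β) ≤ ‖A‖₀ + Lip(A). -/

import Mathlib

open MeasureTheory Filter Topology Real

/-- The one-sided subshift of finite type defined by the 0-1 transition matrix `M`: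
sequences `x : ℕ → Fin r` with `M (x j) (x (j+1)) = 1` for all `j`. -/
abbrev Shift (r : ℕ) (M : Fin r → Fin r → Bool) : Type :=
  {x : ℕ → Fin r // ∀ j : ℕ, M (x j) (x (j + 1)) = true}

variable {r : ℕ} {M : Fin r → Fin r → Bool}

/-- The matrix `M` is irreducible: any symbol can be joined to any other by an
admissible path of positive length. -/
def Irred (M : Fin r → Fin r → Bool) : Prop :=
  ∀ i j : Fin r, ∃ n : ℕ, ∃ w : Fin (n + 2) → Fin r,
    w 0 = i ∧ w (Fin.last (n + 1)) = j ∧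
    ∀ k : Fin (n + 1), M (w k.castSucc) (w k.succ) = true

/-- The left shift map on the subshift. -/
def shiftMap (x : Shift r M) : Shift r M :=
  ⟨fun j => x.1 (j + 1), fun j => x.2 (j + 1)⟩

/-- The metric `d(x,y) = Λ^k`, `k = min { j : x_j ≠ y_j }`, `d(x,x) = 0`. -/
noncomputable def shiftDist (Λ : ℝ) (x y : Shift r M) : ℝ :=
  letI := Classical.decEq (Shift r M)
  if h : x = y then 0
  else Λ ^ Nat.find (show ∃ j : ℕ, x.1 j ≠ y.1 j by
    by_contra hc
    push_neg at hc
    exact h (Subtype.ext (funext hc)))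

/-- `φ` is Lipschitz with constant `K` for the metric `shiftDist Λ`. -/
def LipBnd (Λ K : ℝ) (φ : Shift r M → ℝ) : Prop :=
  ∀ x y : Shift r M, |φ x - φ y| ≤ K * shiftDist Λ x y

/-- `φ` is Lipschitz continuous for the metric `shiftDist Λ`. -/
def IsLip (Λ : ℝ) (φ : Shift r M → ℝ) : Prop :=
  ∃ K : ℝ, LipBnd Λ K φ

/-- The best Lipschitz constant of `φ`. -/
noncomputable def lipC (Λ : ℝ) (φ : Shift r M → ℝ) : ℝ :=
  sInf {K : ℝ | 0 ≤ K ∧ LipBnd Λ K φ}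

/-- The uniform norm `‖φ‖₀`. -/
noncomputable def unorm (φ : Shift r M → ℝ) : ℝ :=
  ⨆ x : Shift r M, |φ x|

/-- An observable on the natural extension `Σ̂_M ⊂ Σ*_M × Σ_M` (with `Σ*_M`
canonically identified with `Σ_M`), as a function of `(y, x)`; it is Lipschitz with
constant `K` for the max-metric. -/
def LipBnd2 (Λ K : ℝ) (A : Shift r M → Shift r M → ℝ) : Prop :=
  ∀ y x y' x' : Shift r M,
    |A y x - A y' x'| ≤ K * max (shiftDist Λ y y') (shiftDist Λ x x')

/-- `A` is Lipschitz continuous on `Σ̂_M`. -/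
def IsLip2 (Λ : ℝ) (A : Shift r M → Shift r M → ℝ) : Prop :=
  ∃ K : ℝ, LipBnd2 Λ K A

/-- The best Lipschitz constant of the observable `A`. -/
noncomputable def lipC2 (Λ : ℝ) (A : Shift r M → Shift r M → ℝ) : ℝ :=
  sInf {K : ℝ | 0 ≤ K ∧ LipBnd2 Λ K A}

/-- The uniform norm `‖A‖₀` of the observable. -/
noncomputable def unorm2 (A : Shift r M → Shift r M → ℝ) : ℝ :=
  ⨆ p : Shift r M × Shift r M, |A p.1 p.2|

/-- `μ` is a `σ`-invariant Borel probability measure on the subshift. -/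
def InvProb (μ : Measure (Shift r M)) : Prop :=
  IsProbabilityMeasure μ ∧ μ.map shiftMap = μ

/-- Entropy of the cylinder partition of length `n`:
`H_n(μ) = - ∑_{|w| = n} μ([w]) log μ([w])`. -/
noncomputable def cylEnt (μ : Measure (Shift r M)) (n : ℕ) : ℝ :=
  ∑ w : Fin n → Fin r,
    Real.negMulLog ((μ {x : Shift r M | ∀ i : Fin n, x.1 i.1 = w i}).toReal)

/-- The Kolmogorov–Sinai entropy `h_μ(σ)` of an invariant measure on the subshift:
since the cylinder partition is generating and `n ↦ H_n(μ)` is subadditive,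
`h_μ(σ) = lim_n H_n(μ)/n = inf_n H_n(μ)/n`. -/
noncomputable def entropy (μ : Measure (Shift r M)) : ℝ :=
  ⨅ n : ℕ, cylEnt μ (n + 1) / (n + 1)

/-- The operator
`G⁺_A(φ)(y) = sup_{μ ∈ M_σ} [ ∫ (A(y,x) + φ(x)) dμ(x) + h_μ(σ) ]`. -/
noncomputable def Gplus (A : Shift r M → Shift r M → ℝ)
    (φ : Shift r M → ℝ) (y : Shift r M) : ℝ :=
  sSup {t : ℝ | ∃ μ : Measure (Shift r M), InvProb μ ∧
    t = ∫ x, (A y x + φ x) ∂μ + entropy μ}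

/-- The maximal ergodic average `max_{μ ∈ M_σ} ∫ B dμ`. -/
noncomputable def maxErg (B : Shift r M → ℝ) : ℝ :=
  sSup {t : ℝ | ∃ μ : Measure (Shift r M), InvProb μ ∧ t = ∫ x, B x ∂μ}

/-- The quotient norm on functions modulo additive constants:
`‖g‖_c = inf_{γ ∈ ℝ} ‖g + γ‖₀`. -/
noncomputable def cnorm (g : Shift r M → ℝ) : ℝ :=
  ⨅ γ : ℝ, unorm (fun x => g x + γ)

/-!
Subtracting the fixed-point equations at `y` and `ȳ` gives
`φ_β(y) - φ_β(ȳ) = G⁺_{βA}(φ_β)(y) - G⁺_{βA}(φ_β)(ȳ)`. For each invariant `μ` the two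
quantities under the suprema differ by `∫ β (A(y,x) - A(ȳ,x)) dμ`, which is at most
`β Lip(A) d(y,ȳ)` in absolute value, and two suprema of uniformly `D`-close families are
`D`-close.
-/

section ShiftLipschitz

variable {r : ℕ} {M : Fin r → Fin r → Bool} {Λ K : ℝ}

lemma shiftDist_nonneg (hΛ : 0 ≤ Λ) (x y : Shift r M) : 0 ≤ shiftDist Λ x y := by
  unfold shiftDist
  split_ifs
  · exact le_rfl
  · positivity

@[simp]
lemma shiftDist_self (x : Shift r M) : shiftDist Λ x x = 0 := by
  simp [shiftDist]

lemma shiftDist_le_pow (hΛ0 : 0 ≤ Λ) (hΛ1 : Λ ≤ 1) {x y : Shift r M} {n : ℕ}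
    (h : ∀ i < n, x.1 i = y.1 i) : shiftDist Λ x y ≤ Λ ^ n := by
  unfold shiftDist
  split_ifs
  · positivity
  · refine pow_le_pow_of_le_one hΛ0 hΛ1 (Nat.le_find_iff _ _ |>.2 fun m hm => ?_)
    simpa using h m hm

lemma eventually_forall_lt_eq (x : Shift r M) (n : ℕ) :
    ∀ᶠ z in 𝓝 x, ∀ i < n, z.1 i = x.1 i := by
  have hcoord (i : ℕ) : ∀ᶠ z in 𝓝 x, z.1 i = x.1 i := by
    refine tendsto_pure.1 ?_
    rw [← nhds_discrete]
    exact ((continuous_apply i).comp continuous_subtype_val).continuousAt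
  simpa [Fin.forall_iff] using eventually_all.2 fun i : Fin n => hcoord i

lemma LipBnd.continuous (hΛ0 : 0 ≤ Λ) (hΛ1 : Λ < 1) {f : Shift r M → ℝ}
    (hf : LipBnd Λ K f) : Continuous f := by
  refine continuous_iff_continuousAt.2 fun x => Metric.tendsto_nhds.2 fun ε hε => ?_
  obtain ⟨n, hn⟩ := exists_pow_lt_of_lt_one (div_pos hε (by positivity : 0 < |K| + 1)) hΛ1
  filter_upwards [eventually_forall_lt_eq x n] with z hz
  have hd := shiftDist_le_pow hΛ0 hΛ1.le hz
  have hd0 := shiftDist_nonneg hΛ0 z x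
  rw [lt_div_iff₀ (by positivity)] at hn
  calc dist (f z) (f x) = |f z - f x| := Real.dist_eq _ _
    _ ≤ K * shiftDist Λ z x := hf z x
    _ ≤ |K| * Λ ^ n := by nlinarith [le_abs_self K, abs_nonneg K]
    _ < ε := by nlinarith [pow_nonneg hΛ0 n]

lemma LipBnd2.lipBnd_right {A : Shift r M → Shift r M → ℝ} (hΛ : 0 ≤ Λ)
    (hA : LipBnd2 Λ K A) (y : Shift r M) : LipBnd Λ K (A y) := fun x x' => by
  simpa [max_eq_right (shiftDist_nonneg hΛ x x')] using hA y x y x'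

lemma LipBnd2.abs_sub_le_left {A : Shift r M → Shift r M → ℝ} (hΛ : 0 ≤ Λ)
    (hA : LipBnd2 Λ K A) (y y' x : Shift r M) : |A y x - A y' x| ≤ K * shiftDist Λ y y' := by
  simpa [max_eq_left (shiftDist_nonneg hΛ y y')] using hA y x y' x

lemma lipBnd2_lipC2 (hΛ : 0 ≤ Λ) {A : Shift r M → Shift r M → ℝ} (hA : IsLip2 Λ A) :
    LipBnd2 Λ (lipC2 Λ A) A := by
  obtain ⟨K, hK⟩ := hA
  have hne : {K : ℝ | 0 ≤ K ∧ LipBnd2 Λ K A}.Nonempty :=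
    ⟨max K 0, le_max_right _ _, fun y x y' x' => (hK y x y' x').trans <|
      mul_le_mul_of_nonneg_right (le_max_left _ _) (le_max_of_le_left (shiftDist_nonneg hΛ _ _))⟩
  have hclosed : IsClosed {K : ℝ | 0 ≤ K ∧ LipBnd2 Λ K A} := by
    simp only [LipBnd2, Set.ofPred_and, Set.ofPred_forall]
    exact isClosed_Ici.inter <| isClosed_iInter fun _ => isClosed_iInter fun _ =>
      isClosed_iInter fun _ => isClosed_iInter fun _ =>
        isClosed_le continuous_const (continuous_id.mul continuous_const)
  exact (hclosed.csInf_mem hne ⟨0, fun _ hK => hK.1⟩).2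

lemma lipC2_nonneg (A : Shift r M → Shift r M → ℝ) : 0 ≤ lipC2 Λ A :=
  Real.sInf_nonneg fun _ hK => hK.1

end ShiftLipschitz

section SupremumPerturbation

variable {S T : Set ℝ} {D : ℝ}

lemma bddAbove_of_forall_exists_le_add (hST : ∀ s ∈ S, ∃ t ∈ T, s ≤ t + D)
    (hT : BddAbove T) : BddAbove S := by
  obtain ⟨c, hc⟩ := hT
  refine ⟨c + D, fun s hs => ?_⟩
  obtain ⟨t, ht, hst⟩ := hST s hs
  linarith [hc ht]

lemma csSup_le_csSup_add (hS : S.Nonempty) (hT : BddAbove T)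
    (hST : ∀ s ∈ S, ∃ t ∈ T, s ≤ t + D) : sSup S ≤ sSup T + D :=
  csSup_le hS fun s hs => by
    obtain ⟨t, ht, hst⟩ := hST s hs
    linarith [le_csSup hT ht]

/-- Closeness is needed in both directions because `sSup` of an empty or unbounded set is the
junk value `0`. -/
lemma abs_csSup_sub_csSup_le (hD : 0 ≤ D) (hST : ∀ s ∈ S, ∃ t ∈ T, s ≤ t + D)
    (hTS : ∀ t ∈ T, ∃ s ∈ S, t ≤ s + D) : |sSup S - sSup T| ≤ D := by
  rcases S.eq_empty_or_nonempty with rfl | hS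
  · obtain rfl : T = ∅ := Set.eq_empty_of_forall_notMem fun t ht => by
      obtain ⟨s, hs, -⟩ := hTS t ht
      exact hs
    simpa using hD
  have hT : T.Nonempty := let ⟨s, hs⟩ := hS; let ⟨t, ht, _⟩ := hST s hs; ⟨t, ht⟩
  by_cases hTb : BddAbove T
  · have hSb := bddAbove_of_forall_exists_le_add hST hTb
    rw [abs_sub_le_iff]
    constructor <;> linarith [csSup_le_csSup_add hS hTb hST, csSup_le_csSup_add hT hSb hTS]
  · have hSb : ¬BddAbove S := fun h => hTb (bddAbove_of_forall_exists_le_add hTS h)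
    simpa [Real.sSup_of_not_bddAbove hSb, Real.sSup_of_not_bddAbove hTb] using hD

end SupremumPerturbation

/-- No integrability is assumed: if neither side is integrable, both integrals are the junk
value `0`. -/
lemma abs_integral_sub_integral_le {α : Type*} [MeasurableSpace α] {μ : Measure α}
    [IsProbabilityMeasure μ] {f g : α → ℝ} {D : ℝ} (hD : 0 ≤ D)
    (hfg : AEStronglyMeasurable (f - g) μ) (hb : ∀ x, |f x - g x| ≤ D) :
    |∫ x, f x ∂μ - ∫ x, g x ∂μ| ≤ D := by
  have hint : Integrable (f - g) μ :=
    (integrable_const D).mono' hfg (.of_forall fun x => by simpa using hb x)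
  by_cases hg : Integrable g μ
  · have hf : Integrable f μ := by simpa using hint.add hg
    rw [← integral_sub hf hg]
    simpa using norm_integral_le_of_norm_le_const (μ := μ)
      (.of_forall fun x => (Real.norm_eq_abs _).trans_le (hb x))
  · have hf : ¬Integrable f μ := fun hf => hg (by simpa using hf.sub hint)
    simpa [integral_undef hf, integral_undef hg] using hD

lemma abs_Gplus_sub_Gplus_le {r : ℕ} {M : Fin r → Fin r → Bool}
    {B : Shift r M → Shift r M → ℝ} {φ : Shift r M → ℝ} {y y' : Shift r M} {D : ℝ}
    (hD : 0 ≤ D) (hmeas : Measurable fun x => B y x - B y' x)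
    (hB : ∀ x, |B y x - B y' x| ≤ D) :
    |Gplus B φ y - Gplus B φ y'| ≤ D := by
  have hμ : ∀ μ : Measure (Shift r M), InvProb μ →
      |(∫ x, (B y x + φ x) ∂μ + entropy μ) - (∫ x, (B y' x + φ x) ∂μ + entropy μ)| ≤ D := by
    intro μ hμ
    have := hμ.1
    rw [add_sub_add_right_eq_sub]
    exact abs_integral_sub_integral_le hD
      (hmeas.aestronglyMeasurable.congr (.of_forall fun x => by simp))
      fun x => by simpa using hB x
  apply abs_csSup_sub_csSup_le hD
  · rintro _ ⟨μ, hinv, rfl⟩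
    exact ⟨_, ⟨μ, hinv, rfl⟩, by linarith [(abs_le.1 (hμ μ hinv)).2]⟩
  · rintro _ ⟨μ, hinv, rfl⟩
    exact ⟨_, ⟨μ, hinv, rfl⟩, by linarith [(abs_le.1 (hμ μ hinv)).1]⟩

theorem effective_potential_equilipschitz_general
    (r : ℕ) (M : Fin r → Fin r → Bool)
    (Λ : ℝ) (hΛ : Λ ∈ Set.Ioo (0 : ℝ) 1)
    (A : Shift r M → Shift r M → ℝ) (hA : IsLip2 Λ A)
    (φ : ℝ → Shift r M → ℝ) (lam : ℝ → ℝ)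
    (heff : ∀ β > (0 : ℝ), IsLip Λ (φ β) ∧
      ∀ y, Gplus (fun y x => β * A y x) (φ β) y = φ β y + lam β) :
    ∀ β > (0 : ℝ), (∀ y ybar : Shift r M,
        |φ β y - φ β ybar| ≤ β * (unorm2 A + lipC2 Λ A) * shiftDist Λ y ybar) ∧
      LipBnd Λ (unorm2 A + lipC2 Λ A) (fun y => φ β y / β) := by
  obtain ⟨hΛ0, hΛ1⟩ := hΛ
  intro β hβ
  have hL := lipBnd2_lipC2 hΛ0.le hA
  have hnorm : 0 ≤ unorm2 A := Real.iSup_nonneg fun _ => abs_nonneg _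
  have key (y ybar : Shift r M) :
      |φ β y - φ β ybar| ≤ β * (unorm2 A + lipC2 Λ A) * shiftDist Λ y ybar := by
    have hd := shiftDist_nonneg hΛ0.le y ybar
    have hlip := lipC2_nonneg (Λ := Λ) A
    have hmeas (y' : Shift r M) : Measurable fun x => β * A y' x :=
      ((hL.lipBnd_right hΛ0.le y').continuous hΛ0.le hΛ1).measurable.const_mul β
    have hG := abs_Gplus_sub_Gplus_le (B := fun y x => β * A y x) (φ := φ β)
      (by positivity : 0 ≤ β * (lipC2 Λ A * shiftDist Λ y ybar))
      ((hmeas y).sub (hmeas ybar)) fun x => by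
        rw [← mul_sub, abs_mul, abs_of_pos hβ]
        exact mul_le_mul_of_nonneg_left (hL.abs_sub_le_left hΛ0.le y ybar x) hβ.le
    rw [(heff β hβ).2, (heff β hβ).2, add_sub_add_right_eq_sub] at hG
    exact hG.trans (by nlinarith [mul_nonneg (mul_nonneg hβ.le hnorm) hd])
  refine ⟨key, fun y ybar => ?_⟩
  rw [div_sub_div_same, abs_div, abs_of_pos hβ, div_le_iff₀ hβ]
  linarith [key y ybar]

/-- If `φ_β` is a forward effective potential for `βA` with effective
constant `λ_β` (i.e. `G⁺_{βA}(φ_β) = φ_β + λ_β`) for every `β > 0`, then the family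
`{φ_β/β}` is equi-Lipschitz: `|φ_β(y) − φ_β(ȳ)| ≤ β (‖A‖₀ + Lip(A)) d(y,ȳ)`. -/
theorem effective_potential_equilipschitz
    (r : ℕ) (hr : 2 ≤ r) (M : Fin r → Fin r → Bool)
    (hSym : ∀ i j, M i j = M j i) (hIrr : Irred M)
    (Λ : ℝ) (hΛ : Λ ∈ Set.Ioo (0 : ℝ) 1)
    (A : Shift r M → Shift r M → ℝ) (hA : IsLip2 Λ A)
    (φ : ℝ → Shift r M → ℝ) (lam : ℝ → ℝ)
    (heff : ∀ β > (0 : ℝ), IsLip Λ (φ β) ∧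
      ∀ y, Gplus (fun y x => β * A y x) (φ β) y = φ β y + lam β) :
    ∀ β > (0 : ℝ), (∀ y ybar : Shift r M,
        |φ β y - φ β ybar| ≤ β * (unorm2 A + lipC2 Λ A) * shiftDist Λ y ybar) ∧
      LipBnd Λ (unorm2 A + lipC2 Λ A) (fun y => φ β y / β) :=
  effective_potential_equilipschitz_general r M Λ hΛ A hA φ lam heff
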